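/- arXiv:2404.04984 — 5 statements merged into one kernel-verified Lean document; each statement's English description precedes it below -/
import Mathlib

section
/- Fix λ > 0 and suppose real numbers (π_{j,n})_{j∈{0,1}, n∈ℤ₊} satisfy, for j = 0 and j = 1: (λ+λ₀+γ)π_{j,0} − δ_{j,0} = μ₁π_{j,1} + α/λ, (λ+ω₁+γ)π_{j,1} − δ_{j,1} = λ₀π_{j,0} + μ₂π_{j,2} + β/λ, and (λ+ω_n+γ)π_{j,n} − δ_{j,n} = λ_{n−1}π_{j,n−1} + μ_{n+1}π_{j,n+1} for n ≥ 2. Set A_{j,n} = 1 − λπ_{j,n} and H = λ^{−1}[(λ + αA_{0,0})(λ + βA_{1,1}) − αβA_{1,0}A_{0,1}], and assume H ≠ 0. Define φ_n = [(λ + βA_{1,1})π_{0,n} − βA_{0,1}π_{1,n}]/H for n ≥ 0. Then (λ+λ₀+β)φ₀ − 1 = μ₁φ₁, (λ+ω₁+α)φ₁ = λ₀φ₀ + μ₂φ₂, and (λ+ω_n+γ)φ_n = λ_{n−1}φ_{n−1} + μ_{n+1}φ_{n+1} for all n ≥ 2. -/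
/-!
`φ` is the combination `(c π₀ - d π₁) / H` of the two rows, with `c = λ + βA_{1,1}` and
`d = βA_{0,1}`. Every equation satisfied by both rows is therefore satisfied by `φ`, with the
combined inhomogeneity `(c r₀ - d r₁) / H`. For `n ≥ 2` there is none. At `n = 1` the
inhomogeneities `β/λ` and `1 + β/λ` combine to `βφ₁`: this is why `d/c` is chosen as
`βA_{0,1} / (λ + βA_{1,1})`, and it moves the `β`-catastrophe term to the left. At `n = 0`
the inhomogeneities `1 + α/λ` and `α/λ` combine to `1 + αφ₀`, by the definition of `H`.
-/

/-- `φ_n` of the paper. -/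
noncomputable def killedComb (l β H : ℝ) (π0 π1 : ℕ → ℝ) (n : ℕ) : ℝ :=
  ((l + β * (1 - l * π1 1)) * π0 n - β * (1 - l * π0 1) * π1 n) / H

lemma three_term_div_comb {K p q a b H : ℝ} {f g : ℕ → ℝ} {i j k : ℕ}
    (hf : K * f j = p * f i + q * f k) (hg : K * g j = p * g i + q * g k) :
    K * ((a * f j - b * g j) / H)
      = p * ((a * f i - b * g i) / H) + q * ((a * f k - b * g k) / H) := by
  linear_combination (a / H) * hf - (b / H) * hg

section Boundary

variable {lam mu : ℕ → ℝ} {α β l H : ℝ} {π0 π1 : ℕ → ℝ}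

lemma killedComb_one (hl : l ≠ 0)
    (h01 : (l + (lam 1 + mu 1) + (α + β)) * π0 1 = lam 0 * π0 0 + mu 2 * π0 2 + β / l)
    (h11 : (l + (lam 1 + mu 1) + (α + β)) * π1 1 - 1 = lam 0 * π1 0 + mu 2 * π1 2 + β / l) :
    (l + (lam 1 + mu 1) + α) * killedComb l β H π0 π1 1
      = lam 0 * killedComb l β H π0 π1 0 + mu 2 * killedComb l β H π0 π1 2 := by
  have row_one_cancel : (l + β * (1 - l * π1 1)) * (β / l) - β * (1 - l * π0 1) * (1 + β / l)
      = β * ((l + β * (1 - l * π1 1)) * π0 1 - β * (1 - l * π0 1) * π1 1) := by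
    field_simp
    ring
  unfold killedComb
  linear_combination (l + β * (1 - l * π1 1)) / H * h01 - β * (1 - l * π0 1) / H * h11
    + row_one_cancel / H

lemma killedComb_zero (hl : l ≠ 0) (hHne : H ≠ 0)
    (hH : H = l⁻¹ * ((l + α * (1 - l * π0 0)) * (l + β * (1 - l * π1 1))
      - α * β * (1 - l * π1 0) * (1 - l * π0 1)))
    (h00 : (l + lam 0 + (α + β)) * π0 0 - 1 = mu 1 * π0 1 + α / l)
    (h10 : (l + lam 0 + (α + β)) * π1 0 = mu 1 * π1 1 + α / l) :
    (l + lam 0 + β) * killedComb l β H π0 π1 0 - 1 = mu 1 * killedComb l β H π0 π1 1 := by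
  have row_zero_combine : (l + β * (1 - l * π1 1)) * (1 + α / l) - β * (1 - l * π0 1) * (α / l)
      = H + α * ((l + β * (1 - l * π1 1)) * π0 0 - β * (1 - l * π0 1) * π1 0) := by
    rw [hH]
    field_simp
    ring
  unfold killedComb
  linear_combination (l + β * (1 - l * π1 1)) / H * h00 - β * (1 - l * π0 1) / H * h10
    + row_zero_combine / H + div_self hHne

end Boundary

theorem stmt_6_general
    (lam mu : ℕ → ℝ)
    (α β : ℝ)
    (l : ℝ) (hl : 0 < l)
    (π0 π1 : ℕ → ℝ)
    (h00 : (l + lam 0 + (α + β)) * π0 0 - 1 = mu 1 * π0 1 + α / l)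
    (h01 : (l + (lam 1 + mu 1) + (α + β)) * π0 1
      = lam 0 * π0 0 + mu 2 * π0 2 + β / l)
    (h0n : ∀ n, 2 ≤ n → (l + (lam n + mu n) + (α + β)) * π0 n
      = lam (n - 1) * π0 (n - 1) + mu (n + 1) * π0 (n + 1))
    (h10 : (l + lam 0 + (α + β)) * π1 0 = mu 1 * π1 1 + α / l)
    (h11 : (l + (lam 1 + mu 1) + (α + β)) * π1 1 - 1
      = lam 0 * π1 0 + mu 2 * π1 2 + β / l)
    (h1n : ∀ n, 2 ≤ n → (l + (lam n + mu n) + (α + β)) * π1 n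
      = lam (n - 1) * π1 (n - 1) + mu (n + 1) * π1 (n + 1))
    (H : ℝ)
    (hH : H = l⁻¹ * ((l + α * (1 - l * π0 0)) * (l + β * (1 - l * π1 1))
      - α * β * (1 - l * π1 0) * (1 - l * π0 1)))
    (hHne : H ≠ 0)
    (φ : ℕ → ℝ)
    (hφ : ∀ n, φ n = ((l + β * (1 - l * π1 1)) * π0 n
      - β * (1 - l * π0 1) * π1 n) / H) :
    ((l + lam 0 + β) * φ 0 - 1 = mu 1 * φ 1) ∧
    ((l + (lam 1 + mu 1) + α) * φ 1 = lam 0 * φ 0 + mu 2 * φ 2) ∧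
    (∀ n, 2 ≤ n → (l + (lam n + mu n) + (α + β)) * φ n
      = lam (n - 1) * φ (n - 1) + mu (n + 1) * φ (n + 1)) := by
  obtain rfl : φ = killedComb l β H π0 π1 := funext hφ
  exact ⟨killedComb_zero hl.ne' hHne hH h00 h10, killedComb_one hl.ne' h01 h11,
    fun n hn => three_term_div_comb (h0n n hn) (h1n n hn)⟩

/-- If `π0, π1` satisfy the resolvent equations of the birth-death
process with two-type catastrophes (rows `j = 0, 1`), `A_{j,n} = 1 - λπ_{j,n}`,
`H = λ⁻¹[(λ + αA_{0,0})(λ + βA_{1,1}) - αβA_{1,0}A_{0,1}] ≠ 0`, and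
`φ_n = [(λ + βA_{1,1})π_{0,n} - βA_{0,1}π_{1,n}]/H`, then `φ` satisfies the killed-process
resolvent equations for the row `j = 0`. -/
theorem stmt_6
    (lam mu : ℕ → ℝ) (hlam : ∀ i, 0 < lam i) (hmu : ∀ i, 1 ≤ i → 0 < mu i)
    (α β : ℝ) (hα : 0 ≤ α) (hβ : 0 ≤ β)
    (l : ℝ) (hl : 0 < l)
    (π0 π1 : ℕ → ℝ)
    (h00 : (l + lam 0 + (α + β)) * π0 0 - 1 = mu 1 * π0 1 + α / l)
    (h01 : (l + (lam 1 + mu 1) + (α + β)) * π0 1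
      = lam 0 * π0 0 + mu 2 * π0 2 + β / l)
    (h0n : ∀ n, 2 ≤ n → (l + (lam n + mu n) + (α + β)) * π0 n
      = lam (n - 1) * π0 (n - 1) + mu (n + 1) * π0 (n + 1))
    (h10 : (l + lam 0 + (α + β)) * π1 0 = mu 1 * π1 1 + α / l)
    (h11 : (l + (lam 1 + mu 1) + (α + β)) * π1 1 - 1
      = lam 0 * π1 0 + mu 2 * π1 2 + β / l)
    (h1n : ∀ n, 2 ≤ n → (l + (lam n + mu n) + (α + β)) * π1 n
      = lam (n - 1) * π1 (n - 1) + mu (n + 1) * π1 (n + 1))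
    (H : ℝ)
    (hH : H = l⁻¹ * ((l + α * (1 - l * π0 0)) * (l + β * (1 - l * π1 1))
      - α * β * (1 - l * π1 0) * (1 - l * π0 1)))
    (hHne : H ≠ 0)
    (φ : ℕ → ℝ)
    (hφ : ∀ n, φ n = ((l + β * (1 - l * π1 1)) * π0 n
      - β * (1 - l * π0 1) * π1 n) / H) :
    ((l + lam 0 + β) * φ 0 - 1 = mu 1 * φ 1) ∧
    ((l + (lam 1 + mu 1) + α) * φ 1 = lam 0 * φ 0 + mu 2 * φ 2) ∧
    (∀ n, 2 ≤ n → (l + (lam n + mu n) + (α + β)) * φ n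
      = lam (n - 1) * φ (n - 1) + mu (n + 1) * φ (n + 1)) :=
  stmt_6_general lam mu α β l hl π0 π1 h00 h01 h0n h10 h11 h1n H hH hHne φ hφ
end

section
/- Fix λ > 0 and suppose real numbers (π_{j,n})_{j∈{0,1}, n∈ℤ₊} satisfy, for j = 0 and j = 1: (λ+λ₀+γ)π_{j,0} − δ_{j,0} = μ₁π_{j,1} + α/λ, (λ+ω₁+γ)π_{j,1} − δ_{j,1} = λ₀π_{j,0} + μ₂π_{j,2} + β/λ, and (λ+ω_n+γ)π_{j,n} − δ_{j,n} = λ_{n−1}π_{j,n−1} + μ_{n+1}π_{j,n+1} for n ≥ 2. Set A_{j,n} = 1 − λπ_{j,n} and H = λ^{−1}[(λ + αA_{0,0})(λ + βA_{1,1}) − αβA_{1,0}A_{0,1}], and assume H ≠ 0. Define φ_n = [−αA_{1,0}π_{0,n} + (λ + αA_{0,0})π_{1,n}]/H for n ≥ 0. Then (λ+λ₀+β)φ₀ = μ₁φ₁, (λ+ω₁+α)φ₁ − 1 = λ₀φ₀ + μ₂φ₂, and (λ+ω_n+γ)φ_n = λ_{n−1}φ_{n−1} + μ_{n+1}φ_{n+1}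 for all n ≥ 2. -/
/-- If `π0, π1` satisfy the resolvent equations of the birth-death
process with two-type catastrophes (rows `j = 0, 1`), `A_{j,n} = 1 - λπ_{j,n}`,
`H = λ⁻¹[(λ + αA_{0,0})(λ + βA_{1,1}) - αβA_{1,0}A_{0,1}] ≠ 0`, and
`φ_n = [-αA_{1,0}π_{0,n} + (λ + αA_{0,0})π_{1,n}]/H`, then `φ` satisfies the
killed-process resolvent equations for the row `j = 1`. -/
theorem stmt_7
    (lam mu : ℕ → ℝ) (hlam : ∀ i, 0 < lam i) (hmu : ∀ i, 1 ≤ i → 0 < mu i)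
    (α β : ℝ) (hα : 0 ≤ α) (hβ : 0 ≤ β)
    (l : ℝ) (hl : 0 < l)
    (π0 π1 : ℕ → ℝ)
    (h00 : (l + lam 0 + (α + β)) * π0 0 - 1 = mu 1 * π0 1 + α / l)
    (h01 : (l + (lam 1 + mu 1) + (α + β)) * π0 1
      = lam 0 * π0 0 + mu 2 * π0 2 + β / l)
    (h0n : ∀ n, 2 ≤ n → (l + (lam n + mu n) + (α + β)) * π0 n
      = lam (n - 1) * π0 (n - 1) + mu (n + 1) * π0 (n + 1))
    (h10 : (l + lam 0 + (α + β)) * π1 0 = mu 1 * π1 1 + α / l)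
    (h11 : (l + (lam 1 + mu 1) + (α + β)) * π1 1 - 1
      = lam 0 * π1 0 + mu 2 * π1 2 + β / l)
    (h1n : ∀ n, 2 ≤ n → (l + (lam n + mu n) + (α + β)) * π1 n
      = lam (n - 1) * π1 (n - 1) + mu (n + 1) * π1 (n + 1))
    (H : ℝ)
    (hH : H = l⁻¹ * ((l + α * (1 - l * π0 0)) * (l + β * (1 - l * π1 1))
      - α * β * (1 - l * π1 0) * (1 - l * π0 1)))
    (hHne : H ≠ 0)
    (φ : ℕ → ℝ)
    (hφ : ∀ n, φ n = (-(α * (1 - l * π1 0)) * π0 n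
      + (l + α * (1 - l * π0 0)) * π1 n) / H) :
    ((l + lam 0 + β) * φ 0 = mu 1 * φ 1) ∧
    ((l + (lam 1 + mu 1) + α) * φ 1 - 1 = lam 0 * φ 0 + mu 2 * φ 2) ∧
    (∀ n, 2 ≤ n → (l + (lam n + mu n) + (α + β)) * φ n
      = lam (n - 1) * φ (n - 1) + mu (n + 1) * φ (n + 1)) := by
  have hl0 := hl.ne'
  set a : ℝ := -(α * (1 - l * π1 0)) with ha
  set b : ℝ := l + α * (1 - l * π0 0) with hb
  set X : ℕ → ℝ := fun n => a * π0 n + b * π1 n with hX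
  have hφ' : ∀ n, φ n = X n / H := fun n => hφ n
  -- denominator-cleared hypotheses
  have h00' : ((l + lam 0 + (α + β)) * π0 0 - 1) * l = mu 1 * π0 1 * l + α := by
    field_simp at h00; linear_combination h00
  have h01' : (l + (lam 1 + mu 1) + (α + β)) * π0 1 * l
      = (lam 0 * π0 0 + mu 2 * π0 2) * l + β := by
    field_simp at h01; linear_combination h01
  have h10' : (l + lam 0 + (α + β)) * π1 0 * l = mu 1 * π1 1 * l + α := by
    field_simp at h10; linear_combination h10
  have h11' : ((l + (lam 1 + mu 1) + (α + β)) * π1 1 - 1) * l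
      = (lam 0 * π1 0 + mu 2 * π1 2) * l + β := by
    field_simp at h11; linear_combination h11
  have hH' : H * l = b * (l + β * (1 - l * π1 1))
      - α * β * (1 - l * π1 0) * (1 - l * π0 1) := by
    rw [hH]; field_simp
  refine ⟨?_, ?_, ?_⟩
  · have key : l * ((l + lam 0 + β) * X 0) = l * (mu 1 * X 1) := by
      simp only [hX]
      linear_combination a * h00' + b * h10'
    have key2 := mul_left_cancel₀ hl0 key
    rw [hφ' 0, hφ' 1]
    rw [mul_div_assoc' , mul_div_assoc']
    rw [div_eq_div_iff hHne hHne]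
    linear_combination H * key2
  · have key : l * ((l + (lam 1 + mu 1) + α) * X 1 - H)
        = l * (lam 0 * X 0 + mu 2 * X 2) := by
      simp only [hX]
      linear_combination a * h01' + b * h11' - hH'
    have key2 := mul_left_cancel₀ hl0 key
    rw [hφ' 0, hφ' 1, hφ' 2]
    field_simp
    linear_combination key2
  · intro n hn
    rw [hφ' n, hφ' (n-1), hφ' (n+1)]
    have e0 := h0n n hn
    have e1 := h1n n hn
    simp only [hX]
    linear_combination (a / H) * e0 + (b / H) * e1
end

section
/- Fix λ > 0 and j ≥ 2. Suppose real numbers (π_{i,n})_{i∈{0,1,j}, n∈ℤ₊} satisfy, for each i ∈ {0, 1, j}: (λ+λ₀+γ)π_{i,0} − δ_{i,0} = μ₁π_{i,1} + α/λ, (λ+ω₁+γ)π_{i,1} − δ_{i,1} = λ₀π_{i,0} + μ₂π_{i,2} + β/λ, and (λ+ω_n+γ)π_{i,n} − δ_{i,n} = λ_{n−1}π_{i,n−1} + μ_{n+1}π_{i,n+1} for n ≥ 2. Set A_{i,n} = 1 − λπ_{i,n}, H = λ^{−1}[(λ + αA_{0,0})(λ + βA_{1,1}) − αβA_{1,0}A_{0,1}],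 and assume H ≠ 0. Define F_j = [αβA_{1,0}A_{j,1} − α(λ + βA_{1,1})A_{j,0}]/(λH), G_j = [αβA_{0,1}A_{j,0} − β(λ + αA_{0,0})A_{j,1}]/(λH), and φ_n = π_{j,n} + F_j π_{0,n} + G_j π_{1,n} for n ≥ 0. Then (λ+λ₀+β)φ₀ = μ₁φ₁, (λ+ω₁+α)φ₁ = λ₀φ₀ + μ₂φ₂, and (λ+ω_n+γ)φ_n − δ_{j,n} = λ_{n−1}φ_{n−1} + μ_{n+1}φ_{n+1} for all n ≥ 2. -/
/-- Fix `j ≥ 2`. If `π0, π1, πj` satisfy the resolvent equations of the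
birth-death process with two-type catastrophes (rows `0`, `1` and `j`),
`A_{i,n} = 1 - λπ_{i,n}`, `H = λ⁻¹[(λ + αA_{0,0})(λ + βA_{1,1}) - αβA_{1,0}A_{0,1}] ≠ 0`,
`F_j = [αβA_{1,0}A_{j,1} - α(λ + βA_{1,1})A_{j,0}]/(λH)`,
`G_j = [αβA_{0,1}A_{j,0} - β(λ + αA_{0,0})A_{j,1}]/(λH)`, and
`φ_n = π_{j,n} + F_j π_{0,n} + G_j π_{1,n}`, then `φ` satisfies the killed-process
resolvent equations for the row `j`. -/
theorem stmt_8
    (lam mu : ℕ → ℝ) (hlam : ∀ i, 0 < lam i) (hmu : ∀ i, 1 ≤ i → 0 < mu i)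
    (α β : ℝ) (hα : 0 ≤ α) (hβ : 0 ≤ β)
    (l : ℝ) (hl : 0 < l)
    (j : ℕ) (hj : 2 ≤ j)
    (π0 π1 πj : ℕ → ℝ)
    (h00 : (l + lam 0 + (α + β)) * π0 0 - 1 = mu 1 * π0 1 + α / l)
    (h01 : (l + (lam 1 + mu 1) + (α + β)) * π0 1
      = lam 0 * π0 0 + mu 2 * π0 2 + β / l)
    (h0n : ∀ n, 2 ≤ n → (l + (lam n + mu n) + (α + β)) * π0 n
      = lam (n - 1) * π0 (n - 1) + mu (n + 1) * π0 (n + 1))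
    (h10 : (l + lam 0 + (α + β)) * π1 0 = mu 1 * π1 1 + α / l)
    (h11 : (l + (lam 1 + mu 1) + (α + β)) * π1 1 - 1
      = lam 0 * π1 0 + mu 2 * π1 2 + β / l)
    (h1n : ∀ n, 2 ≤ n → (l + (lam n + mu n) + (α + β)) * π1 n
      = lam (n - 1) * π1 (n - 1) + mu (n + 1) * π1 (n + 1))
    (hj0 : (l + lam 0 + (α + β)) * πj 0 = mu 1 * πj 1 + α / l)
    (hj1 : (l + (lam 1 + mu 1) + (α + β)) * πj 1
      = lam 0 * πj 0 + mu 2 * πj 2 + β / l)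
    (hjn : ∀ n, 2 ≤ n → (l + (lam n + mu n) + (α + β)) * πj n
        - (if j = n then (1 : ℝ) else 0)
      = lam (n - 1) * πj (n - 1) + mu (n + 1) * πj (n + 1))
    (H : ℝ)
    (hH : H = l⁻¹ * ((l + α * (1 - l * π0 0)) * (l + β * (1 - l * π1 1))
      - α * β * (1 - l * π1 0) * (1 - l * π0 1)))
    (hHne : H ≠ 0)
    (F G : ℝ)
    (hF : F = (α * β * (1 - l * π1 0) * (1 - l * πj 1)
      - α * (l + β * (1 - l * π1 1)) * (1 - l * πj 0)) / (l * H))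
    (hG : G = (α * β * (1 - l * π0 1) * (1 - l * πj 0)
      - β * (l + α * (1 - l * π0 0)) * (1 - l * πj 1)) / (l * H))
    (φ : ℕ → ℝ)
    (hφ : ∀ n, φ n = πj n + F * π0 n + G * π1 n) :
    ((l + lam 0 + β) * φ 0 = mu 1 * φ 1) ∧
    ((l + (lam 1 + mu 1) + α) * φ 1 = lam 0 * φ 0 + mu 2 * φ 2) ∧
    (∀ n, 2 ≤ n → (l + (lam n + mu n) + (α + β)) * φ n
        - (if j = n then (1 : ℝ) else 0)
      = lam (n - 1) * φ (n - 1) + mu (n + 1) * φ (n + 1)) := by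
  have hl0 : l ≠ 0 := ne_of_gt hl
  have hlH : l * H ≠ 0 := mul_ne_zero hl0 hHne
  have hinv : l * l⁻¹ = 1 := mul_inv_cancel₀ hl0
  have hLH : l * H = (l + α * (1 - l * π0 0)) * (l + β * (1 - l * π1 1))
      - α * β * (1 - l * π1 0) * (1 - l * π0 1) := by
    rw [hH]; field_simp
  have hF' : F * (l * H) = α * β * (1 - l * π1 0) * (1 - l * πj 1)
      - α * (l + β * (1 - l * π1 1)) * (1 - l * πj 0) := by
    rw [hF]; field_simp
  have hG' : G * (l * H) = α * β * (1 - l * π0 1) * (1 - l * πj 0)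
      - β * (l + α * (1 - l * π0 0)) * (1 - l * πj 1) := by
    rw [hG]; field_simp
  have e1 : F * (l + α * (1 - l * π0 0)) + G * (α * (1 - l * π1 0))
      = -α * (1 - l * πj 0) := by
    apply mul_right_cancel₀ hlH
    linear_combination (l + α * (1 - l * π0 0)) * hF'
      + (α * (1 - l * π1 0)) * hG' + (α * (1 - l * πj 0)) * hLH
  have e2 : F * (β * (1 - l * π0 1)) + G * (l + β * (1 - l * π1 1))
      = -β * (1 - l * πj 1) := by
    apply mul_right_cancel₀ hlH
    linear_combination (β * (1 - l * π0 1)) * hF'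
      + (l + β * (1 - l * π1 1)) * hG' + (β * (1 - l * πj 1)) * hLH
  refine ⟨?_, ?_, ?_⟩
  · linear_combination hj0 + F * h00 + G * h10 + e1 / l
      + (l + lam 0 + β) * (hφ 0) - mu 1 * (hφ 1)
      + (α * (F * π0 0 + G * π1 0 + πj 0) - F) * hinv
  · linear_combination hj1 + F * h01 + G * h11 + e2 / l
      + (l + (lam 1 + mu 1) + α) * (hφ 1) - lam 0 * (hφ 0) - mu 2 * (hφ 2)
      + (β * (F * π0 1 + G * π1 1 + πj 1) - G) * hinv
  · intro n hn
    linear_combination (hjn n hn) + F * (h0n n hn) + G * (h1n n hn)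
      + (l + (lam n + mu n) + (α + β)) * (hφ n)
      - lam (n - 1) * (hφ (n - 1)) - mu (n + 1) * (hφ (n + 1))
end

section
/- Fix λ > 0, j ∈ ℤ₊, n ∈ ℤ₊, and real numbers x_{i,m} for i ∈ {0, 1, j} and m ∈ {0, 1, n}. Define π_{i,m} = x_{i,m} + (αx_{0,m} + βx_{1,m})/λ, A_{i,m} = 1 − λπ_{i,m}, H = λ^{−1}[(λ + αA_{0,0})(λ + βA_{1,1}) − αβA_{1,0}A_{0,1}] (assumed nonzero), U_j = α(λ+α+β)(1 − βx_{1,1})x_{j,0} + αβ(λ+α+β)x_{1,0}x_{j,1}, and V_j = β(λ+α+β)(1 − αx_{0,0})x_{j,1} + αβ(λ+α+β)x_{0,1}x_{j,0}. Define φ_{j,n} as follows: if j = 0, φ_{0,n} = [(λ + βA_{1,1})π_{0,n} − βA_{0,1}π_{1,n}]/H; if j = 1, φ_{1,n} = [−αA_{1,0}π_{0,n} + (λ + αA_{0,0})π_{1,n}]/H; if j ≥ 2, φ_{j,n} = π_{j,n} + F_j π_{0,n} + G_j π_{1,n} with F_j = [αβA_{1,0}A_{j,1} − α(λ + βA_{1,1})A_{j,0}]/(λH)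 and G_j = [αβA_{0,1}A_{j,0} − β(λ + αA_{0,0})A_{j,1}]/(λH). Then φ_{j,n} = x_{j,n} + [U_j x_{0,n} + V_j x_{1,n}]/H. -/
/-!
Write `s m = α x 0 m + β x 1 m`, so that `π i m = x i m + s m / λ` and `A i m = 1 - λ x i m - s m`
is polynomial in the `x`. With `D = λ H`, the coefficients `F j = D F_j` and `G j = D G_j` of the
`j ≥ 2` formula `φ` are polynomials, and the whole statement reduces to the two polynomial
identities `λ² U_j = (λ + α) F j + α G j + α D` and `λ² V_j = β F j + (λ + β) G j + β D`.
The formulas for `j = 0` and `j = 1` are the `j ≥ 2` formula specialised, since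
`F 0 + D = λ (λ + β A 1 1)`, `G 0 = -λ β A 0 1`, `F 1 = -λ α A 1 0` and `G 1 + D = λ (λ + α A 0 0)`.
-/

namespace Catastrophe

variable {K : Type*} [Field K] (α β l : K) (x : ℕ → ℕ → K)

def π (i m : ℕ) : K := x i m + (α * x 0 m + β * x 1 m) / l

def A (i m : ℕ) : K := 1 - l * x i m - (α * x 0 m + β * x 1 m)

def D : K := (l + α * A α β l x 0 0) * (l + β * A α β l x 1 1)
  - α * β * A α β l x 1 0 * A α β l x 0 1

def F (j : ℕ) : K :=
  α * β * A α β l x 1 0 * A α β l x j 1 - α * (l + β * A α β l x 1 1) * A α β l x j 0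

def G (j : ℕ) : K :=
  α * β * A α β l x 0 1 * A α β l x j 0 - β * (l + α * A α β l x 0 0) * A α β l x j 1

def U (j : ℕ) : K := α * (l + α + β) * (1 - β * x 1 1) * x j 0
  + α * β * (l + α + β) * x 1 0 * x j 1

def V (j : ℕ) : K := β * (l + α + β) * (1 - α * x 0 0) * x j 1
  + α * β * (l + α + β) * x 0 1 * x j 0

def φ (j n : ℕ) : K :=
  π α β l x j n + F α β l x j / D α β l x * π α β l x 0 n
    + G α β l x j / D α β l x * π α β l x 1 n

variable {α β l x}

theorem one_sub_mul_π (hl : l ≠ 0) (i m : ℕ) : 1 - l * π α β l x i m = A α β l x i m := by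
  unfold π A
  field_simp
  ring

variable (α β l x)

theorem sq_mul_U (j : ℕ) :
    l ^ 2 * U α β l x j = (l + α) * F α β l x j + α * G α β l x j + α * D α β l x := by
  unfold U F G D A
  ring

theorem sq_mul_V (j : ℕ) :
    l ^ 2 * V α β l x j = β * F α β l x j + (l + β) * G α β l x j + β * D α β l x := by
  unfold V F G D A
  ring

variable {α β l x}

theorem φ_eq (hl : l ≠ 0) (hD : D α β l x ≠ 0) (j n : ℕ) :
    φ α β l x j n = x j n
      + (U α β l x j * x 0 n + V α β l x j * x 1 n) / (D α β l x / l) := by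
  have hU := eq_div_of_mul_eq (pow_ne_zero 2 hl) ((mul_comm _ _).trans (sq_mul_U α β l x j))
  have hV := eq_div_of_mul_eq (pow_ne_zero 2 hl) ((mul_comm _ _).trans (sq_mul_V α β l x j))
  rw [hU, hV]
  unfold φ π
  field_simp
  ring

theorem φ_zero (hD : D α β l x ≠ 0) (n : ℕ) :
    φ α β l x 0 n = ((l + β * A α β l x 1 1) * π α β l x 0 n
      - β * A α β l x 0 1 * π α β l x 1 n) / (D α β l x / l) := by
  rw [div_div_eq_mul_div]
  unfold φ
  field_simp
  unfold F G D
  ring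

theorem φ_one (hD : D α β l x ≠ 0) (n : ℕ) :
    φ α β l x 1 n = (-(α * A α β l x 1 0) * π α β l x 0 n
      + (l + α * A α β l x 0 0) * π α β l x 1 n) / (D α β l x / l) := by
  rw [div_div_eq_mul_div]
  unfold φ
  field_simp
  unfold F G D
  ring

end Catastrophe

theorem stmt_11_general
    (α β : ℝ)
    (l : ℝ)
    (j n : ℕ)
    (x : ℕ → ℕ → ℝ)
    (π A : ℕ → ℕ → ℝ)
    (hπ : ∀ i m, π i m = x i m + (α * x 0 m + β * x 1 m) / l)
    (hA : ∀ i m, A i m = 1 - l * π i m)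
    (H : ℝ)
    (hH : H = l⁻¹ * ((l + α * A 0 0) * (l + β * A 1 1) - α * β * A 1 0 * A 0 1))
    (hHne : H ≠ 0)
    (U V : ℝ)
    (hU : U = α * (l + α + β) * (1 - β * x 1 1) * x j 0
      + α * β * (l + α + β) * x 1 0 * x j 1)
    (hV : V = β * (l + α + β) * (1 - α * x 0 0) * x j 1
      + α * β * (l + α + β) * x 0 1 * x j 0)
    (φ : ℝ)
    (hφ0 : j = 0 → φ = ((l + β * A 1 1) * π 0 n - β * A 0 1 * π 1 n) / H)
    (hφ1 : j = 1 → φ = (-(α * A 1 0) * π 0 n + (l + α * A 0 0) * π 1 n) / H)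
    (hφj : 2 ≤ j → φ = π j n
      + (α * β * A 1 0 * A j 1 - α * (l + β * A 1 1) * A j 0) / (l * H) * π 0 n
      + (α * β * A 0 1 * A j 0 - β * (l + α * A 0 0) * A j 1) / (l * H) * π 1 n) :
    φ = x j n + (U * x 0 n + V * x 1 n) / H := by
  have hl : l ≠ 0 := by
    rintro rfl
    simp [hH] at hHne
  obtain rfl : π = Catastrophe.π α β l x := funext₂ hπ
  obtain rfl : A = Catastrophe.A α β l x :=
    funext₂ fun i m => (hA i m).trans (Catastrophe.one_sub_mul_π hl i m)
  have hHD : H = Catastrophe.D α β l x / l := hH.trans (inv_mul_eq_div _ _)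
  have hD : Catastrophe.D α β l x ≠ 0 := by
    rintro hD
    simp [hHD, hD] at hHne
  have hφ : φ = Catastrophe.φ α β l x j n := by
    rcases j with _ | _ | j
    · rw [hφ0 rfl, hHD, Catastrophe.φ_zero hD]
    · rw [hφ1 rfl, hHD, Catastrophe.φ_one hD]
    · rw [hφj (by omega), hHD, mul_div_cancel₀ _ hl]
      rfl
  rw [hφ, Catastrophe.φ_eq hl hD, hHD, hU, hV]
  rfl

/-- The unified resolvent formula
`φ_{j,n} = x_{j,n} + [U_j x_{0,n} + V_j x_{1,n}]/H` for the killed process, where the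
`x i m` play the role of catastrophe-free resolvent values `π̂_{i,m}(λ+γ)`,
`π i m = x i m + (α x 0 m + β x 1 m)/λ`, `A i m = 1 - λ (π i m)`,
`H = λ⁻¹[(λ + α A 0 0)(λ + β A 1 1) - αβ (A 1 0)(A 0 1)] ≠ 0`,
`U_j = α(λ+α+β)(1 - β x 1 1) x j 0 + αβ(λ+α+β) (x 1 0)(x j 1)`,
`V_j = β(λ+α+β)(1 - α x 0 0) x j 1 + αβ(λ+α+β) (x 0 1)(x j 0)`, and `φ_{j,n}` is given
by the case formulas for `j = 0`, `j = 1` and `j ≥ 2`. -/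
theorem stmt_11
    (α β : ℝ) (hα : 0 ≤ α) (hβ : 0 ≤ β)
    (l : ℝ) (hl : 0 < l)
    (j n : ℕ)
    (x : ℕ → ℕ → ℝ)
    (π A : ℕ → ℕ → ℝ)
    (hπ : ∀ i m, π i m = x i m + (α * x 0 m + β * x 1 m) / l)
    (hA : ∀ i m, A i m = 1 - l * π i m)
    (H : ℝ)
    (hH : H = l⁻¹ * ((l + α * A 0 0) * (l + β * A 1 1) - α * β * A 1 0 * A 0 1))
    (hHne : H ≠ 0)
    (U V : ℝ)
    (hU : U = α * (l + α + β) * (1 - β * x 1 1) * x j 0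
      + α * β * (l + α + β) * x 1 0 * x j 1)
    (hV : V = β * (l + α + β) * (1 - α * x 0 0) * x j 1
      + α * β * (l + α + β) * x 0 1 * x j 0)
    (φ : ℝ)
    (hφ0 : j = 0 → φ = ((l + β * A 1 1) * π 0 n - β * A 0 1 * π 1 n) / H)
    (hφ1 : j = 1 → φ = (-(α * A 1 0) * π 0 n + (l + α * A 0 0) * π 1 n) / H)
    (hφj : 2 ≤ j → φ = π j n
      + (α * β * A 1 0 * A j 1 - α * (l + β * A 1 1) * A j 0) / (l * H) * π 0 n
      + (α * β * A 0 1 * A j 0 - β * (l + α * A 0 0) * A j 1) / (l * H) * π 1 n) :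
    φ = x j n + (U * x 0 n + V * x 1 n) / H :=
  stmt_11_general α β l j n x π A hπ hA H hH hHne U V hU hV φ hφ0 hφ1 hφj
end

section
/- Fix α ≥ 0, β ≥ 0 with α + β > 0. Let φ₋₂, φ₋₁ : (0,∞) → ℝ and φ₀, φ₁ : [0,∞) → ℝ, with φ₀ and φ₁ continuous at 0, satisfy for every λ > 0: λφ₋₂(λ) = α(1/λ − φ₋₂(λ) − φ₋₁(λ) − φ₀(λ)) and λφ₋₁(λ) = β(1/λ − φ₋₂(λ) − φ₋₁(λ) − φ₁(λ)). Then as λ → 0⁺, λφ₋₂(λ) → α[1 + β(φ₁(0) − φ₀(0))]/(α+β), λφ₋₁(λ) → β[1 + α(φ₀(0) − φ₁(0))]/(α+β), and λ(φ₋₂(λ) + φ₋₁(λ)) → 1. -/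
open Filter

/-- If `α + β > 0`, `φ₀, φ₁` are continuous at `0` (from the right),
and for every `λ > 0` the resolvent relations
`λφ₋₂(λ) = α(1/λ - φ₋₂(λ) - φ₋₁(λ) - φ₀(λ))` and
`λφ₋₁(λ) = β(1/λ - φ₋₂(λ) - φ₋₁(λ) - φ₁(λ))` hold, then as `λ → 0⁺`,
`λφ₋₂(λ) → α[1 + β(φ₁(0) - φ₀(0))]/(α+β)`,
`λφ₋₁(λ) → β[1 + α(φ₀(0) - φ1(0))]/(α+β)`, and `λ(φ₋₂(λ) + φ₋₁(λ)) → 1`. -/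
theorem stmt_13
    (α β : ℝ) (hα : 0 ≤ α) (hβ : 0 ≤ β) (hαβ : 0 < α + β)
    (φm2 φm1 φ0 φ1 : ℝ → ℝ)
    (hc0 : ContinuousWithinAt φ0 (Set.Ici 0) 0)
    (hc1 : ContinuousWithinAt φ1 (Set.Ici 0) 0)
    (h2 : ∀ l : ℝ, 0 < l → l * φm2 l = α * (1 / l - φm2 l - φm1 l - φ0 l))
    (h1 : ∀ l : ℝ, 0 < l → l * φm1 l = β * (1 / l - φm2 l - φm1 l - φ1 l)) :
    Tendsto (fun l => l * φm2 l) (nhdsWithin 0 (Set.Ioi 0))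
      (nhds (α * (1 + β * (φ1 0 - φ0 0)) / (α + β))) ∧
    Tendsto (fun l => l * φm1 l) (nhdsWithin 0 (Set.Ioi 0))
      (nhds (β * (1 + α * (φ0 0 - φ1 0)) / (α + β))) ∧
    Tendsto (fun l => l * (φm2 l + φm1 l)) (nhdsWithin 0 (Set.Ioi 0))
      (nhds 1) := by
  have hne : (α + β) ≠ 0 := ne_of_gt hαβ
  -- closed forms on Ioi 0
  have key2 : ∀ l : ℝ, 0 < l →
      l * φm2 l = α * (1 + β * (φ1 l - φ0 l) - l * φ0 l) / (l + α + β) := by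
    intro l hl
    have e2 := h2 l hl
    have e1 := h1 l hl
    have hl' : l ≠ 0 := ne_of_gt hl
    have hd : l + α + β ≠ 0 := by positivity
    field_simp at e2 e1 ⊢
    nlinarith [e2, e1, mul_self_nonneg l, sq_nonneg l,
      mul_comm l (φm2 l), mul_comm l (φm1 l)]
  have key1 : ∀ l : ℝ, 0 < l →
      l * φm1 l = β * (1 + α * (φ0 l - φ1 l) - l * φ1 l) / (l + α + β) := by
    intro l hl
    have e2 := h2 l hl
    have e1 := h1 l hl
    have hl' : l ≠ 0 := ne_of_gt hl
    have hd : l + α + β ≠ 0 := by positivity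
    field_simp at e2 e1 ⊢
    nlinarith [e2, e1]
  -- limits of the ingredients
  have hl0 : Tendsto (fun l : ℝ => l) (nhdsWithin 0 (Set.Ioi 0)) (nhds 0) :=
    tendsto_id.mono_left nhdsWithin_le_nhds
  have h0 : Tendsto φ0 (nhdsWithin 0 (Set.Ioi 0)) (nhds (φ0 0)) :=
    hc0.tendsto.mono_left (nhdsWithin_mono _ Set.Ioi_subset_Ici_self)
  have h1' : Tendsto φ1 (nhdsWithin 0 (Set.Ioi 0)) (nhds (φ1 0)) :=
    hc1.tendsto.mono_left (nhdsWithin_mono _ Set.Ioi_subset_Ici_self)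
  have T2 : Tendsto (fun l => l * φm2 l) (nhdsWithin 0 (Set.Ioi 0))
      (nhds (α * (1 + β * (φ1 0 - φ0 0)) / (α + β))) := by
    have lim : Tendsto (fun l : ℝ => α * (1 + β * (φ1 l - φ0 l) - l * φ0 l) / (l + α + β))
        (nhdsWithin 0 (Set.Ioi 0))
        (nhds (α * (1 + β * (φ1 0 - φ0 0) - 0 * φ0 0) / (0 + α + β))) := by
      exact (tendsto_const_nhds.mul (((tendsto_const_nhds.add
        (tendsto_const_nhds.mul (h1'.sub h0))).sub (hl0.mul h0)))).div
        ((hl0.add tendsto_const_nhds).add tendsto_const_nhds) (by simpa using hne)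
    have lim' : Tendsto (fun l : ℝ => α * (1 + β * (φ1 l - φ0 l) - l * φ0 l) / (l + α + β))
        (nhdsWithin 0 (Set.Ioi 0)) (nhds (α * (1 + β * (φ1 0 - φ0 0)) / (α + β))) := by
      convert lim using 2 <;> ring
    refine lim'.congr' ?_
    filter_upwards [self_mem_nhdsWithin] with l hl
    exact (key2 l hl).symm
  have T1 : Tendsto (fun l => l * φm1 l) (nhdsWithin 0 (Set.Ioi 0))
      (nhds (β * (1 + α * (φ0 0 - φ1 0)) / (α + β))) := by
    have lim : Tendsto (fun l : ℝ => β * (1 + α * (φ0 l - φ1 l) - l * φ1 l) / (l + α + β))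
        (nhdsWithin 0 (Set.Ioi 0))
        (nhds (β * (1 + α * (φ0 0 - φ1 0) - 0 * φ1 0) / (0 + α + β))) := by
      exact (tendsto_const_nhds.mul (((tendsto_const_nhds.add
        (tendsto_const_nhds.mul (h0.sub h1'))).sub (hl0.mul h1')))).div
        ((hl0.add tendsto_const_nhds).add tendsto_const_nhds) (by simpa using hne)
    have lim' : Tendsto (fun l : ℝ => β * (1 + α * (φ0 l - φ1 l) - l * φ1 l) / (l + α + β))
        (nhdsWithin 0 (Set.Ioi 0)) (nhds (β * (1 + α * (φ0 0 - φ1 0)) / (α + β))) := by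
      convert lim using 2 <;> ring
    refine lim'.congr' ?_
    filter_upwards [self_mem_nhdsWithin] with l hl
    exact (key1 l hl).symm
  refine ⟨T2, T1, ?_⟩
  have := T2.add T1
  have hval : α * (1 + β * (φ1 0 - φ0 0)) / (α + β)
      + β * (1 + α * (φ0 0 - φ1 0)) / (α + β) = 1 := by
    field_simp
    ring
  rw [hval] at this
  refine this.congr ?_
  intro l; ring
end
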